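/- arXiv:0905.2116 — 2 statements merged into one kernel-verified Lean document; each statement's English description precedes it below -/
import Mathlib

section
/- If γ: [0,1] → S² is a smooth curve with det(γ(t), γ'(t), γ''(t)) > 0 for all t, and A is a 3×3 real matrix of positive determinant, then the curve γ^A(t) = Aγ(t)/|Aγ(t)| is well defined (Aγ(t) ≠ 0) and satisfies det(γ^A(t), (γ^A)'(t), (γ^A)''(t)) > 0 for all t. -/
/-- Euclidean norm on ℝ³ (as `Fin 3 → ℝ`). -/
noncomputable def enorm3 (v : Fin 3 → ℝ) : ℝ :=
  Real.sqrt ((v 0) ^ 2 + (v 1) ^ 2 + (v 2) ^ 2)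

noncomputable def det3 (v₁ v₂ v₃ : Fin 3 → ℝ) : ℝ := Matrix.det (Matrix.of ![v₁, v₂, v₃])

lemma det3_mulVec (A : Matrix (Fin 3) (Fin 3) ℝ) (u v w : Fin 3 → ℝ) :
    det3 (A.mulVec u) (A.mulVec v) (A.mulVec w) = A.det * det3 u v w := by
  simp [det3, Matrix.det_fin_three, Matrix.mulVec, dotProduct, Fin.sum_univ_three]
  ring

lemma det3_expand (a b d : ℝ) (u v w : Fin 3 → ℝ) :
    det3 (a • u) (a • v + b • u) ((a • w + b • v) + (b • v + d • u)) = a^3 * det3 u v w := by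
  simp [det3, Matrix.det_fin_three, Pi.add_apply, Pi.smul_apply, smul_eq_mul]
  ring

lemma vec_pos_of_ne {v : Fin 3 → ℝ} (hv : v ≠ 0) : 0 < v 0 ^ 2 + v 1 ^ 2 + v 2 ^ 2 := by
  rcases lt_or_eq_of_le (by positivity : (0:ℝ) ≤ v 0 ^ 2 + v 1 ^ 2 + v 2 ^ 2) with h | h
  · exact h
  · exfalso; apply hv
    have h0 : v 0 = 0 := by nlinarith [sq_nonneg (v 0), sq_nonneg (v 1), sq_nonneg (v 2)]
    have h1 : v 1 = 0 := by nlinarith [sq_nonneg (v 0), sq_nonneg (v 1), sq_nonneg (v 2)]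
    have h2 : v 2 = 0 := by nlinarith [sq_nonneg (v 0), sq_nonneg (v 1), sq_nonneg (v 2)]
    funext i; fin_cases i <;> simp [h0, h1, h2]

lemma enorm3_pos {v : Fin 3 → ℝ} (hv : v ≠ 0) : 0 < enorm3 v :=
  Real.sqrt_pos.mpr (vec_pos_of_ne hv)

theorem locally_convex_of_projective (γ : ℝ → Fin 3 → ℝ)
    (hγ : ContDiff ℝ (⊤ : ℕ∞) γ)
    (hsphere : ∀ t ∈ Set.Icc (0:ℝ) 1, enorm3 (γ t) = 1)
    (hconv : ∀ t ∈ Set.Icc (0:ℝ) 1, 0 < det3 (γ t) (deriv γ t) (deriv (deriv γ) t))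
    (A : Matrix (Fin 3) (Fin 3) ℝ) (hA : 0 < A.det) :
    let γA : ℝ → Fin 3 → ℝ := fun t => (enorm3 (A.mulVec (γ t)))⁻¹ • A.mulVec (γ t)
    ∀ t ∈ Set.Icc (0:ℝ) 1,
      A.mulVec (γ t) ≠ 0 ∧
      0 < det3 (γA t) (deriv γA t) (deriv (deriv γA) t) := by
  intro γA t₀ ht₀
  have hgs : ContDiff ℝ (⊤ : ℕ∞) γ := hγ.of_le (by simp)
  -- the linear map
  set L : (Fin 3 → ℝ) →L[ℝ] (Fin 3 → ℝ) := LinearMap.toContinuousLinearMap A.mulVecLin with hL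
  have hLv : ∀ v, L v = A.mulVec v := fun v => rfl
  set c : ℝ → Fin 3 → ℝ := fun t => A.mulVec (γ t) with hcdef
  have hcsm : ContDiff ℝ (⊤ : ℕ∞) c := L.contDiff.comp hgs
  -- injectivity of A
  have hAinj : Function.Injective A.mulVec :=
    Matrix.mulVec_injective_iff_isUnit.mpr (Matrix.isUnit_iff_isUnit_det A |>.mpr
      (isUnit_iff_ne_zero.mpr hA.ne'))
  have hγne : ∀ t ∈ Set.Icc (0:ℝ) 1, γ t ≠ 0 := by
    intro t ht h0
    have := hsphere t ht
    rw [h0] at this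
    simp [enorm3] at this
  have hcne : ∀ t ∈ Set.Icc (0:ℝ) 1, c t ≠ 0 := by
    intro t ht h0
    exact hγne t ht (hAinj (by simpa [Matrix.mulVec_zero] using h0))
  refine ⟨hcne t₀ ht₀, ?_⟩
  -- derivatives of c
  have hγd : ∀ t, HasDerivAt γ (deriv γ t) t :=
    fun t => (hgs.differentiable (by simp) t).hasDerivAt
  have hcd : ∀ t, HasDerivAt c (A.mulVec (deriv γ t)) t :=
    fun t => (L.hasFDerivAt.comp_hasDerivAt t (hγd t))
  have hderivc : deriv c = fun t => A.mulVec (deriv γ t) :=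
    funext fun t => (hcd t).deriv
  have hgps : ContDiff ℝ (⊤ : ℕ∞) (deriv γ) := (contDiff_infty_iff_deriv.mp hgs).2
  have hgpd : ∀ t, HasDerivAt (deriv γ) (deriv (deriv γ) t) t :=
    fun t => (hgps.differentiable (by simp) t).hasDerivAt
  have hc'sm : ContDiff ℝ (⊤ : ℕ∞) (deriv c) := by
    rw [hderivc]; exact L.contDiff.comp hgps
  have hc'd : ∀ t, HasDerivAt (deriv c) (A.mulVec (deriv (deriv γ) t)) t := by
    intro t
    rw [hderivc]
    exact L.hasFDerivAt.comp_hasDerivAt t (hgpd t)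
  -- the scalar factor
  set f : ℝ → ℝ := fun t => (enorm3 (c t))⁻¹ with hfdef
  have hγA : γA = fun t => f t • c t := rfl
  -- open set where c ≠ 0
  set U : Set ℝ := c ⁻¹' {0}ᶜ with hU
  have hUopen : IsOpen U := (isOpen_compl_singleton).preimage (hcsm.continuous)
  have hmemU : ∀ t ∈ Set.Icc (0:ℝ) 1, t ∈ U := fun t ht => hcne t ht
  have hfCt : ∀ t ∈ U, ContDiffAt ℝ (⊤ : ℕ∞) f t := by
    intro t ht
    have hcne' : c t ≠ 0 := ht
    have hpos : 0 < (c t 0) ^ 2 + (c t 1) ^ 2 + (c t 2) ^ 2 := vec_pos_of_ne hcne'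
    have hq : ContDiffAt ℝ (⊤ : ℕ∞) (fun t => (c t 0) ^ 2 + (c t 1) ^ 2 + (c t 2) ^ 2) t := by
      have h0 : ContDiff ℝ (⊤ : ℕ∞) (fun t => c t 0) :=
        (ContinuousLinearMap.proj 0 : (Fin 3 → ℝ) →L[ℝ] ℝ).contDiff.comp hcsm
      have h1 : ContDiff ℝ (⊤ : ℕ∞) (fun t => c t 1) :=
        (ContinuousLinearMap.proj 1 : (Fin 3 → ℝ) →L[ℝ] ℝ).contDiff.comp hcsm
      have h2 : ContDiff ℝ (⊤ : ℕ∞) (fun t => c t 2) :=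
        (ContinuousLinearMap.proj 2 : (Fin 3 → ℝ) →L[ℝ] ℝ).contDiff.comp hcsm
      exact (((h0.pow 2).add (h1.pow 2)).add (h2.pow 2)).contDiffAt
    have hsq : ContDiffAt ℝ (⊤ : ℕ∞) (fun t => enorm3 (c t)) t := by
      have := (Real.contDiffAt_sqrt (n := (⊤ : ℕ∞)) hpos.ne').comp t hq
      exact this
    exact hsq.inv (ne_of_gt (enorm3_pos hcne'))
  have hfU : ContDiffOn ℝ (⊤ : ℕ∞) f U := fun t ht => (hfCt t ht).contDiffWithinAt
  have hfd : ∀ t ∈ U, HasDerivAt f (deriv f t) t := by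
    intro t ht
    exact ((hfCt t ht).differentiableAt (by simp)).hasDerivAt
  -- first derivative of γA on U
  have hγAd : ∀ t ∈ U, HasDerivAt γA (f t • A.mulVec (deriv γ t) + deriv f t • c t) t := by
    intro t ht
    exact (hfd t ht).smul (hcd t)
  have hderivγA : ∀ t ∈ U, deriv γA t = f t • A.mulVec (deriv γ t) + deriv f t • c t :=
    fun t ht => (hγAd t ht).deriv
  -- second derivative at t₀
  have hf'U : ContDiffOn ℝ (⊤ : ℕ∞) (deriv f) U :=
    hfU.deriv_of_isOpen hUopen (by exact_mod_cast le_top)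
  have hf'd : HasDerivAt (deriv f) (deriv (deriv f) t₀) t₀ :=
    (((hf'U t₀ (hmemU t₀ ht₀)).differentiableWithinAt (by simp)).differentiableAt
      (hUopen.mem_nhds (hmemU t₀ ht₀))).hasDerivAt
  have hfd₀ : HasDerivAt f (deriv f t₀) t₀ := hfd t₀ (hmemU t₀ ht₀)
  have hD1 : HasDerivAt (fun t => f t • A.mulVec (deriv γ t) + deriv f t • c t)
      ((f t₀ • A.mulVec (deriv (deriv γ) t₀) + deriv f t₀ • A.mulVec (deriv γ t₀))
        + (deriv f t₀ • A.mulVec (deriv γ t₀) + deriv (deriv f) t₀ • c t₀)) t₀ := by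
    have h1 : HasDerivAt (fun t => f t • A.mulVec (deriv γ t))
        (f t₀ • A.mulVec (deriv (deriv γ) t₀) + deriv f t₀ • A.mulVec (deriv γ t₀)) t₀ := by
      have := hfd₀.smul (x := t₀) (f := fun t => A.mulVec (deriv γ t))
        (f' := A.mulVec (deriv (deriv γ) t₀)) ?_
      · exact this
      · have := hc'd t₀; rwa [hderivc] at this
    have h2 : HasDerivAt (fun t => deriv f t • c t)
        (deriv f t₀ • A.mulVec (deriv γ t₀) + deriv (deriv f) t₀ • c t₀) t₀ :=
      hf'd.smul (hcd t₀)
    exact h1.add h2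
  have hevEq : deriv γA =ᶠ[nhds t₀] (fun t => f t • A.mulVec (deriv γ t) + deriv f t • c t) := by
    filter_upwards [hUopen.mem_nhds (hmemU t₀ ht₀)] with t ht
    exact hderivγA t ht
  have hderiv2 : deriv (deriv γA) t₀
      = (f t₀ • A.mulVec (deriv (deriv γ) t₀) + deriv f t₀ • A.mulVec (deriv γ t₀))
        + (deriv f t₀ • A.mulVec (deriv γ t₀) + deriv (deriv f) t₀ • c t₀) := by
    rw [hevEq.deriv_eq]
    exact hD1.deriv
  -- final computation
  have hfpos : 0 < f t₀ := inv_pos.mpr (enorm3_pos (hcne t₀ ht₀))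
  rw [hderivγA t₀ (hmemU t₀ ht₀), hderiv2]
  have : γA t₀ = f t₀ • c t₀ := rfl
  rw [this, hcdef]
  rw [det3_expand (f t₀) (deriv f t₀) (deriv (deriv f) t₀)
    (A.mulVec (γ t₀)) (A.mulVec (deriv γ t₀)) (A.mulVec (deriv (deriv γ) t₀)),
    det3_mulVec]
  have hc3 : 0 < f t₀ ^ 3 := by positivity
  exact mul_pos hc3 (mul_pos hA (hconv t₀ ht₀))
end

section
/- For every s ∈ ℂ with |s| ≤ 1/4, the closed plane curve g(θ) = g_s(e^{iθ}), where g_s(z) = −i·z² − (i/10)·z⁻³ + s·z⁻¹, is locally convex: identifying ℂ with ℝ², det(g'(θ), g''(θ)) > 0 for all θ ∈ ℝ (equivalently, Im( conj(g'(θ)) · g''(θ) ) > 0). -/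
open Complex

/-- The plane curve `θ ↦ g_s(e^{iθ})` where `g_s(z) = -i z² - (i/10) z⁻³ + s z⁻¹`. -/
noncomputable def g (s : ℂ) : ℝ → ℂ := fun θ =>
  -Complex.I * (Complex.exp (θ * Complex.I)) ^ (2 : ℤ)
    - (Complex.I / 10) * (Complex.exp (θ * Complex.I)) ^ (-3 : ℤ)
    + s * (Complex.exp (θ * Complex.I)) ^ (-1 : ℤ)

lemma hd_exp (c : ℂ) (θ : ℝ) :
    HasDerivAt (fun θ : ℝ => Complex.exp (c * (θ * Complex.I)))
      (c * Complex.I * Complex.exp (c * (θ * Complex.I))) θ := by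
  have h1 : HasDerivAt (fun θ : ℝ => ((θ : ℂ))) 1 θ :=
    (hasDerivAt_id ((θ : ℝ) : ℂ)).comp_ofReal
  have h2 := (h1.const_mul (c * Complex.I)).cexp
  simp only [mul_one] at h2
  have he : ∀ x : ℝ, c * ((x : ℂ) * Complex.I) = c * Complex.I * (x : ℂ) := fun x => by ring
  simp only [he]
  convert h2 using 1
  ring

lemma g_eq (s : ℂ) : g s = fun θ : ℝ =>
    -Complex.I * Complex.exp ((2 : ℂ) * (θ * Complex.I))
      - Complex.I / 10 * Complex.exp ((-3 : ℂ) * (θ * Complex.I))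
      + s * Complex.exp ((-1 : ℂ) * (θ * Complex.I)) := by
  funext θ
  simp only [g]
  rw [← Complex.exp_int_mul _ (2 : ℤ), ← Complex.exp_int_mul _ (-3 : ℤ),
    ← Complex.exp_int_mul _ (-1 : ℤ)]
  norm_num

lemma hd_g (s : ℂ) (θ : ℝ) :
    HasDerivAt (g s)
      (2 * Complex.exp ((2 : ℂ) * (θ * Complex.I))
        - 3 / 10 * Complex.exp ((-3 : ℂ) * (θ * Complex.I))
        - Complex.I * s * Complex.exp ((-1 : ℂ) * (θ * Complex.I))) θ := by
  rw [g_eq]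
  have h := (((hd_exp 2 θ).const_mul (-Complex.I)).sub
    ((hd_exp (-3) θ).const_mul (Complex.I / 10))).add ((hd_exp (-1) θ).const_mul s)
  convert h using 1
  · rfl
  · rfl
  linear_combination (2 * Complex.exp ((2 : ℂ) * (θ * Complex.I))
    - 3 / 10 * Complex.exp ((-3 : ℂ) * (θ * Complex.I))) * Complex.I_mul_I

lemma deriv_g (s : ℂ) : deriv (g s) = fun θ : ℝ =>
    2 * Complex.exp ((2 : ℂ) * (θ * Complex.I))
      - 3 / 10 * Complex.exp ((-3 : ℂ) * (θ * Complex.I))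
      - Complex.I * s * Complex.exp ((-1 : ℂ) * (θ * Complex.I)) := by
  funext θ; exact (hd_g s θ).deriv

lemma hd_g2 (s : ℂ) (θ : ℝ) :
    HasDerivAt (deriv (g s))
      (4 * Complex.I * Complex.exp ((2 : ℂ) * (θ * Complex.I))
        + 9 * Complex.I / 10 * Complex.exp ((-3 : ℂ) * (θ * Complex.I))
        - s * Complex.exp ((-1 : ℂ) * (θ * Complex.I))) θ := by
  rw [deriv_g]
  have h := (((hd_exp 2 θ).const_mul (2 : ℂ)).sub
    ((hd_exp (-3) θ).const_mul ((3:ℂ) / 10))).sub ((hd_exp (-1) θ).const_mul (Complex.I * s))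
  convert h using 1
  · rfl
  · rfl
  linear_combination (-s * Complex.exp ((-1 : ℂ) * (θ * Complex.I))) * Complex.I_mul_I

theorem g_locally_convex :
    ∀ s : ℂ, ‖s‖ ≤ 1 / 4 →
      ∀ θ : ℝ, 0 < ((starRingEnd ℂ) (deriv (g s) θ) * deriv (deriv (g s)) θ).im := by
  intro s hs θ
  have h1 : deriv (g s) θ = 2 * Complex.exp ((2 : ℂ) * (θ * Complex.I))
      - 3 / 10 * Complex.exp ((-3 : ℂ) * (θ * Complex.I))
      - Complex.I * s * Complex.exp ((-1 : ℂ) * (θ * Complex.I)) := by rw [deriv_g]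
  have h2 : deriv (deriv (g s)) θ = 4 * Complex.I * Complex.exp ((2 : ℂ) * (θ * Complex.I))
      + 9 * Complex.I / 10 * Complex.exp ((-3 : ℂ) * (θ * Complex.I))
      - s * Complex.exp ((-1 : ℂ) * (θ * Complex.I)) := (hd_g2 s θ).deriv
  set a := Complex.exp ((2 : ℂ) * (θ * Complex.I)) with ha
  set b := Complex.exp ((-3 : ℂ) * (θ * Complex.I)) with hb
  set c := Complex.exp ((-1 : ℂ) * (θ * Complex.I)) with hc
  have habs : ∀ k : ℂ, k.im = 0 → ‖Complex.exp (k * (θ * Complex.I))‖ = 1 := by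
    intro k hk
    rw [Complex.norm_exp]
    have : (k * ((θ:ℂ) * Complex.I)).re = 0 := by
      simp [Complex.mul_re, Complex.mul_im, hk]
    rw [this, Real.exp_zero]
  have haa : ‖a‖ = 1 := habs 2 (by simp)
  have hbb : ‖b‖ = 1 := habs (-3) (by simp)
  have hcc : ‖c‖ = 1 := habs (-1) (by simp)
  rw [h1, h2]
  set p := (starRingEnd ℂ) a with hp
  set q := (starRingEnd ℂ) b with hq
  set r := (starRingEnd ℂ) c with hr
  set s' := (starRingEnd ℂ) s with hs'
  have key : ∀ z : ℂ, ‖z‖ = 1 → (starRingEnd ℂ) z * z = 1 := by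
    intro z hz
    rw [Complex.conj_mul', hz]
    norm_num
  have hpa : p * a = 1 := key a haa
  have hpp : ‖p‖ = 1 := by rw [hp, Complex.norm_conj, haa]
  have hqq : ‖q‖ = 1 := by rw [hq, Complex.norm_conj, hbb]
  have hrr : ‖r‖ = 1 := by rw [hr, Complex.norm_conj, hcc]
  have hss : ‖s'‖ = ‖s‖ := by rw [hs', Complex.norm_conj]
  have hconj : (starRingEnd ℂ) (2 * a - 3 / 10 * b - Complex.I * s * c)
      = 2 * p - 3 / 10 * q + Complex.I * s' * r := by
    rw [map_sub, map_sub, map_mul, map_mul, map_mul, map_mul, map_div₀, Complex.conj_I]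
    simp only [map_ofNat]
    ring
  set t1 := 9 * Complex.I / 5 * (p * b) with ht1
  set t2 := (-2 * s) * (p * c) with ht2
  set t3 := (-6 * Complex.I / 5) * (q * a) with ht3
  set t4 := (-27 * Complex.I / 100) * (q * b) with ht4
  set t5 := (3 / 10 * s) * (q * c) with ht5
  set t6 := (-4 * s') * (r * a) with ht6
  set t7 := (-9 / 10 * s') * (r * b) with ht7
  set t8 := (-Complex.I * s' * s) * (r * c) with ht8
  have hgoal : (starRingEnd ℂ) (2 * a - 3 / 10 * b - Complex.I * s * c)
      * (4 * Complex.I * a + 9 * Complex.I / 10 * b - s * c)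
      = 8 * Complex.I + (t1 + t2 + t3 + t4 + t5 + t6 + t7 + t8) := by
    rw [hconj, ht1, ht2, ht3, ht4, ht5, ht6, ht7, ht8]
    linear_combination (8 * Complex.I) * hpa
      + (4 * (s' * (r * a)) + 9 / 10 * (s' * (r * b))) * Complex.I_mul_I
  rw [hgoal]
  have him : ∀ z : ℂ, ∀ m : ℝ, ‖z‖ ≤ m → -m ≤ z.im := by
    intro z m h
    exact (abs_le.mp ((Complex.abs_im_le_norm z).trans h)).1
  have e1 : -(9/5 : ℝ) ≤ t1.im := him _ _ (by
    rw [ht1]; simp [norm_mul, norm_div, Complex.norm_I, hpp, hbb])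
  have e2 : -(1/2 : ℝ) ≤ t2.im := him _ _ (by
    rw [ht2]; simp [norm_mul, Complex.norm_I, hpp, hcc]; nlinarith)
  have e3 : -(6/5 : ℝ) ≤ t3.im := him _ _ (by
    rw [ht3]; simp [norm_mul, norm_div, Complex.norm_I, hqq, haa])
  have e4 : -(27/100 : ℝ) ≤ t4.im := him _ _ (by
    rw [ht4]; simp [norm_mul, norm_div, Complex.norm_I, hqq, hbb])
  have e5 : -(3/40 : ℝ) ≤ t5.im := him _ _ (by
    rw [ht5]; simp [norm_mul, norm_div, hqq, hcc]; nlinarith)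
  have e6 : -(1 : ℝ) ≤ t6.im := him _ _ (by
    rw [ht6]; simp [norm_mul, hrr, haa, hss]; nlinarith)
  have e7 : -(9/40 : ℝ) ≤ t7.im := him _ _ (by
    rw [ht7]; simp [norm_mul, norm_div, hrr, hbb, hss]; nlinarith)
  have e8 : -(1/16 : ℝ) ≤ t8.im := him _ _ (by
    rw [ht8]; simp [norm_mul, Complex.norm_I, hrr, hcc, hss]; nlinarith [norm_nonneg s])
  simp only [Complex.add_im, Complex.mul_im, Complex.I_im, Complex.I_re]
  norm_num
  linarith
end
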